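/- Consider a market with n buyers where buyer i has a k_i-demand valuation, |M| = Σ_{i=1}^n k_i, and every optimal allocation allocates all items and gives each buyer i exactly k_i items. If a price vector p : M → ℝ≥0 satisfies that for every buyer i and every S ∈ D_p(v_i), the bundle S is legal for buyer i and the remaining items M∖S can be partitioned among the other buyers so that each of them receives a bundle legal for her, then p is an optimal dynamic pricing: for every buyer i and every S ∈ D_p(v_i) there is an optimal allocation in which buyer i receives exactly S. -/

import Mathlib

open Finset

section Defs

variable {M : Type*} [Fintype M] [DecidableEq M] {ι : Type*} [Fintype ι]

/-- A valuation is monotone. -/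
def MonotoneVal (v : Finset M → ℝ) : Prop :=
  ∀ ⦃S T : Finset M⦄, S ⊆ T → v S ≤ v T

/-- Quasi-linear utility of a bundle `S` at prices `p`. -/
def util (v : Finset M → ℝ) (p : M → ℝ) (S : Finset M) : ℝ :=
  v S - ∑ x ∈ S, p x

/-- `S` is a utility-maximizing bundle for valuation `v` at prices `p`. -/
def InDemand (v : Finset M → ℝ) (p : M → ℝ) (S : Finset M) : Prop :=
  ∀ T : Finset M, util v p T ≤ util v p S

/-- Gross-substitutes valuation. -/
def GrossSubstitutes (v : Finset M → ℝ) : Prop :=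
  ∀ p q : M → ℝ, (∀ x, 0 ≤ p x) → (∀ x, 0 ≤ q x) → (∀ x, p x ≤ q x) →
    ∀ A : Finset M, InDemand v p A →
      ∃ B : Finset M, InDemand v q B ∧ ∀ x ∈ A, p x = q x → x ∈ B

/-- `v` is a `k`-demand (multi-demand) valuation:
`v S` is the maximum of `∑_{x ∈ T} v {x}` over `T ⊆ S` with `|T| ≤ k`. -/
def MultiDemand (v : Finset M → ℝ) (k : ℕ) : Prop :=
  ∀ S : Finset M,
    IsGreatest {t : ℝ | ∃ T ⊆ S, T.card ≤ k ∧ t = ∑ x ∈ T, v {x}} (v S)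

/-- `v` is a unit-demand valuation: `v ∅ = 0` and `v S = max_{x ∈ S} v {x}`. -/
def UnitDemand (v : Finset M → ℝ) : Prop :=
  v ∅ = 0 ∧ ∀ S : Finset M, S.Nonempty →
    IsGreatest {t : ℝ | ∃ x ∈ S, t = v {x}} (v S)

/-- An allocation: a family of pairwise disjoint bundles. -/
def IsAlloc (A : ι → Finset M) : Prop :=
  ∀ i j : ι, i ≠ j → Disjoint (A i) (A j)

/-- Social welfare of an allocation. -/
def SW (v : ι → Finset M → ℝ) (A : ι → Finset M) : ℝ :=
  ∑ i, v i (A i)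

/-- An optimal allocation: it maximizes social welfare among allocations. -/
def IsOptimalAlloc (v : ι → Finset M → ℝ) (A : ι → Finset M) : Prop :=
  IsAlloc A ∧ ∀ B : ι → Finset M, IsAlloc B → SW v B ≤ SW v A

/-- `p` is an optimal dynamic pricing: every demanded bundle of every buyer is
her bundle in some optimal allocation. -/
def IsDynamicPricing (v : ι → Finset M → ℝ) (p : M → ℝ) : Prop :=
  (∀ x, 0 ≤ p x) ∧
  ∀ (i : ι) (S : Finset M), InDemand (v i) p S →
    ∃ A : ι → Finset M, IsOptimalAlloc v A ∧ A i = S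

/-- Walrasian equilibrium: every buyer gets a demanded bundle and unallocated
items have price 0. -/
def IsWalrasianEq (v : ι → Finset M → ℝ) (A : ι → Finset M) (p : M → ℝ) : Prop :=
  (∀ x, 0 ≤ p x) ∧ IsAlloc A ∧ (∀ i, InDemand (v i) p (A i)) ∧
  ∀ x : M, (∀ i, x ∉ A i) → p x = 0

/-- Item `x` is legal for buyer `i`: some optimal allocation gives `x` to `i`. -/
def LegalItem (v : ι → Finset M → ℝ) (i : ι) (x : M) : Prop :=
  ∃ A : ι → Finset M, IsOptimalAlloc v A ∧ x ∈ A i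

/-- A bundle `S` is legal for buyer `i`: `|S| = k i` and every item of `S` is legal for `i`. -/
def LegalBundle (v : ι → Finset M → ℝ) (k : ι → ℕ) (i : ι) (S : Finset M) : Prop :=
  S.card = k i ∧ ∀ x ∈ S, LegalItem v i x

/-- A legal allocation: every buyer's bundle is legal for her. -/
def LegalAlloc (v : ι → Finset M → ℝ) (k : ι → ℕ) (A : ι → Finset M) : Prop :=
  IsAlloc A ∧ ∀ i, LegalBundle v k i (A i)

/-- Submodularity condition (SM). -/
def SMcond (v : Finset M → ℝ) : Prop :=
  ∀ (x y : M) (S : Finset M), x ≠ y → x ∉ S → y ∉ S →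
    v S + v (S ∪ {x, y}) ≤ v (S ∪ {x}) + v (S ∪ {y})

/-- Condition (RGP). -/
def RGPcond (v : Finset M → ℝ) : Prop :=
  ∀ (x y z : M) (S : Finset M), x ≠ y → x ≠ z → y ≠ z → x ∉ S → y ∉ S → z ∉ S →
    v (S ∪ {x}) + v (S ∪ {y, z}) ≤
      max (v (S ∪ {y}) + v (S ∪ {x, z})) (v (S ∪ {z}) + v (S ∪ {x, y}))

/-- Condition (NP-SM) with nonnegative prices. -/
def NPSM (v : Finset M → ℝ) : Prop :=
  ¬ ∃ (p : M → ℝ) (x y : M) (S : Finset M),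
      (∀ a, 0 ≤ p a) ∧ x ≠ y ∧ x ∉ S ∧ y ∉ S ∧ 0 < p x ∧ 0 < p y ∧
      InDemand v p S ∧ InDemand v p (S ∪ {x, y}) ∧
      ∀ C : Finset M, InDemand v p C → (C ⊆ S ∨ ∃ T ⊆ S, C = T ∪ {x, y})

/-- Condition (NP-RGP) with nonnegative prices. -/
def NPRGP (v : Finset M → ℝ) : Prop :=
  ¬ ∃ (p : M → ℝ) (x y z : M) (S : Finset M),
      (∀ a, 0 ≤ p a) ∧ x ≠ y ∧ x ≠ z ∧ y ≠ z ∧ x ∉ S ∧ y ∉ S ∧ z ∉ S ∧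
      0 < p x ∧ 0 < p y ∧ 0 < p z ∧
      InDemand v p (S ∪ {x}) ∧ InDemand v p (S ∪ {y, z}) ∧
      ∀ C : Finset M, InDemand v p C →
        ((∃ T ⊆ S, C = T ∪ {x}) ∨ ∃ T ⊆ S, C = T ∪ {y, z})

end Defs

/-!
Encode an allocation that hands out every item by the assignment `σ : M → ι` sending each
item to its owner. On bundles of at most `k j` items a `k j`-demand valuation is additive, so
for assignments with bundle sizes `k` the welfare is the linear value `∑ x, v (σ x) {x}`, and an
optimal allocation `τ` maximizes it among assignments with the same load. Since `τ` admits no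
improving cycle of reassignments, longest walks in its exchange graph give dual potentials `φ`
with `v j {x} - v (τ x) {x} ≤ φ j - φ (τ x)`. Against them, the value of an assignment with
the load of `τ` is the optimum minus a nonnegative slack summed over its edges; an edge used by
some optimal allocation has zero slack. So an allocation made of legal bundles is optimal, and
the hypothesis provides one that gives any demanded bundle to its buyer.
-/

namespace Assignment

variable {ι M : Type*} (τ : M → ι)

/-- A walk `x :: L` to `j` moves item `x` from `τ x` to `j` and continues with the walk `L`
to `τ x`. -/
def walkSource : ι → List M → ι
  | j, [] => j
  | _, x :: L => walkSource (τ x) L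

def walkGain (w : ι → M → ℝ) : ι → List M → ℝ
  | _, [] => 0
  | j, x :: L => w j x - w (τ x) x + walkGain w (τ x) L

lemma walkSource_append (j : ι) (L L' : List M) :
    walkSource τ j (L ++ L') = walkSource τ (walkSource τ j L) L' := by
  induction L generalizing j with
  | nil => rfl
  | cons x L ih => exact ih (τ x)

lemma walkGain_append (w : ι → M → ℝ) (j : ι) (L L' : List M) :
    walkGain τ w j (L ++ L') = walkGain τ w j L + walkGain τ w (walkSource τ j L) L' := by
  induction L generalizing j with
  | nil => simp [walkGain, walkSource]
  | cons x L ih => simp only [List.cons_append, walkGain, ih, walkSource]; ring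

section DecidableEq

variable [DecidableEq M]

def walkAssign : ι → List M → M → ι
  | _, [] => τ
  | j, x :: L => Function.update (walkAssign (τ x) L) x j

lemma walkAssign_of_notMem {j : ι} {L : List M} {y : M} (hy : y ∉ L) :
    walkAssign τ j L y = τ y := by
  induction L generalizing j with
  | nil => rfl
  | cons x L ih =>
    rw [List.mem_cons, not_or] at hy
    rw [walkAssign, Function.update_of_ne hy.1, ih hy.2]

end DecidableEq

variable [Fintype M]

def load (σ : M → ι) : Multiset ι := univ.val.map σ

def value (w : ι → M → ℝ) (σ : M → ι) : ℝ := ∑ x, w (σ x) x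

def IsOptimal (w : ι → M → ℝ) (σ : M → ι) : Prop :=
  ∀ ρ, load ρ = load σ → value w ρ ≤ value w σ

lemma sum_comp_eq_of_load_eq {σ : M → ι} (h : load σ = load τ) (f : ι → ℝ) :
    ∑ x, f (σ x) = ∑ x, f (τ x) := by
  have hsum : ∀ ρ : M → ι, ∑ x, f (ρ x) = ((load ρ).map f).sum := fun ρ => by
    rw [sum_eq_multiset_sum, load, Multiset.map_map]; rfl
  rw [hsum, hsum, h]

section DecidableEq

variable [DecidableEq M]

lemma load_update_add (σ : M → ι) (x : M) (j : ι) :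
    load (Function.update σ x j) + {σ x} = load σ + {j} := by
  have hrest : (univ.val.erase x).map (Function.update σ x j) = (univ.val.erase x).map σ :=
    Multiset.map_congr rfl fun y hy =>
      Function.update_of_ne ((Multiset.Nodup.mem_erase_iff univ.nodup).mp hy).1 _ _
  rw [load, load, ← Multiset.cons_erase (mem_univ x), Multiset.map_cons, Multiset.map_cons,
    Function.update_self, hrest, ← Multiset.singleton_add, ← Multiset.singleton_add]
  abel

lemma value_update (w : ι → M → ℝ) (σ : M → ι) (x : M) (j : ι) :
    value w (Function.update σ x j) = value w σ - w (σ x) x + w j x := by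
  simp only [value, ← add_sum_erase _ _ (mem_univ x), Function.update_self]
  rw [sum_congr rfl fun y hy => by rw [Function.update_of_ne (ne_of_mem_erase hy)]]
  ring

lemma load_walkAssign_add (j : ι) {L : List M} (hL : L.Nodup) :
    load (walkAssign τ j L) + {walkSource τ j L} = load τ + {j} := by
  induction L generalizing j with
  | nil => rfl
  | cons x L ih =>
    obtain ⟨hxL, hL⟩ := List.nodup_cons.mp hL
    have hupd := load_update_add (walkAssign τ (τ x) L) x j
    rw [walkAssign_of_notMem τ hxL] at hupd
    apply add_right_cancel (b := {τ x})
    calc load (walkAssign τ j (x :: L)) + {walkSource τ j (x :: L)} + {τ x}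
        = load (walkAssign τ (τ x) L) + {walkSource τ (τ x) L} + {j} := by
          rw [walkAssign, walkSource, add_right_comm, hupd, add_right_comm]
      _ = load τ + {j} + {τ x} := by rw [ih (τ x) hL, add_right_comm]

lemma value_walkAssign (w : ι → M → ℝ) (j : ι) {L : List M} (hL : L.Nodup) :
    value w (walkAssign τ j L) = value w τ + walkGain τ w j L := by
  induction L generalizing j with
  | nil => simp [walkAssign, walkGain]
  | cons x L ih =>
    obtain ⟨hxL, hL⟩ := List.nodup_cons.mp hL
    rw [walkAssign, value_update, walkAssign_of_notMem τ hxL, ih (τ x) hL, walkGain]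
    ring

end DecidableEq

variable {τ} {w : ι → M → ℝ}

lemma IsOptimal.walkGain_nonpos (hτ : IsOptimal w τ) {j : ι} {L : List M} (hL : L.Nodup)
    (hclosed : walkSource τ j L = j) : walkGain τ w j L ≤ 0 := by
  classical
  have hload := load_walkAssign_add τ j hL
  rw [hclosed] at hload
  have := hτ _ (add_right_cancel hload)
  rw [value_walkAssign τ w j hL] at this
  linarith

/-- The potential of `j` is the largest gain of a walk with distinct items ending at `j`. -/
theorem IsOptimal.exists_potential (hτ : IsOptimal w τ) :
    ∃ φ : ι → ℝ, ∀ x j, w j x - w (τ x) x ≤ φ j - φ (τ x) := by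
  let φ : ι → ℝ := fun j =>
    (univ : Finset {L : List M // L.Nodup}).sup' ⟨⟨[], List.nodup_nil⟩, mem_univ _⟩
      fun L => walkGain τ w j L.1
  have le_φ : ∀ j (L : List M) (hL : L.Nodup), walkGain τ w j L ≤ φ j := fun j L hL =>
    le_sup' (fun L : {L : List M // L.Nodup} => walkGain τ w j L.1) (mem_univ ⟨L, hL⟩)
  refine ⟨φ, fun x j => ?_⟩
  obtain ⟨⟨L, hL⟩, -, hφ⟩ := exists_mem_eq_sup' ⟨⟨[], List.nodup_nil⟩, mem_univ _⟩
    fun L : {L : List M // L.Nodup} => walkGain τ w (τ x) L.1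
  change φ (τ x) = walkGain τ w (τ x) L at hφ
  by_cases hx : x ∈ L
  · -- cut the walk at `x`: the part before it is a closed walk, the rest extends by `x`
    obtain ⟨A, C, rfl⟩ := List.append_of_mem hx
    have hsrc : walkSource τ (τ x) (A ++ [x]) = τ x := by rw [walkSource_append]; rfl
    have hcycle := hτ.walkGain_nonpos (hL.sublist (by simp)) hsrc
    have hsplit : walkGain τ w (τ x) (A ++ x :: C)
        = walkGain τ w (τ x) (A ++ [x]) + walkGain τ w (τ x) C := by
      rw [show A ++ x :: C = A ++ [x] ++ C by simp, walkGain_append, hsrc]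
    have hxC : (x :: C).Nodup := hL.sublist (by simp)
    have := le_φ j _ hxC
    rw [walkGain] at this
    linarith
  · have := le_φ j (x :: L) (List.nodup_cons.mpr ⟨hx, hL⟩)
    rw [walkGain] at this
    linarith

theorem IsOptimal.value_eq_of_edges_optimal (hτ : IsOptimal w τ) {σ : M → ι}
    (hσ : load σ = load τ)
    (hedge : ∀ x, ∃ ρ, load ρ = load τ ∧ value w ρ = value w τ ∧ ρ x = σ x) :
    value w σ = value w τ := by
  obtain ⟨φ, hφ⟩ := hτ.exists_potential
  set slack : M → ι → ℝ := fun x j => φ j - φ (τ x) - (w j x - w (τ x) x)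
  have slack_nonneg : ∀ x j, 0 ≤ slack x j := fun x j => sub_nonneg.mpr (hφ x j)
  have value_eq : ∀ ρ, load ρ = load τ → value w ρ = value w τ - ∑ x, slack x (ρ x) := by
    intro ρ hρ
    simp only [slack, sum_sub_distrib, sum_comp_eq_of_load_eq τ hρ, value]
    ring
  have tight : ∀ x, slack x (σ x) = 0 := by
    intro x
    obtain ⟨ρ, hρ, hρval, hρx⟩ := hedge x
    have hsum : ∑ y, slack y (ρ y) = 0 := by linarith [value_eq ρ hρ]
    rw [← hρx]
    exact (sum_eq_zero_iff_of_nonneg fun y _ => slack_nonneg y (ρ y)).mp hsum x (mem_univ x)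
  rw [value_eq σ hσ, sum_eq_zero fun x _ => tight x, sub_zero]

section Alloc

variable [DecidableEq ι]

def alloc (σ : M → ι) (j : ι) : Finset M := univ.filter (σ · = j)

@[simp]
lemma mem_alloc {σ : M → ι} {j : ι} {x : M} : x ∈ alloc σ j ↔ σ x = j := by
  simp [alloc]

lemma isAlloc_alloc (σ : M → ι) : IsAlloc (alloc σ) := fun _ _ hij =>
  disjoint_left.mpr fun _ hi hj => hij ((mem_alloc.mp hi).symm.trans (mem_alloc.mp hj))

lemma exists_alloc_eq {A : ι → Finset M} (hA : IsAlloc A) (hcover : ∀ x, ∃ j, x ∈ A j) :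
    ∃ σ : M → ι, alloc σ = A := by
  choose σ hσ using hcover
  refine ⟨σ, funext fun j => ext fun x => ⟨fun hx => mem_alloc.mp hx ▸ hσ x, fun hx => ?_⟩⟩
  by_contra hne
  exact disjoint_left.mp (hA _ _ (mt mem_alloc.mpr hne)) (hσ x) hx

lemma load_eq_load_iff {σ τ : M → ι} : load σ = load τ ↔ ∀ j, #(alloc σ j) = #(alloc τ j) := by
  have hcount : ∀ (ρ : M → ι) (j : ι), (load ρ).count j = #(alloc ρ j) := fun ρ j => by
    simp [load, alloc, Multiset.count_map, eq_comm, card_def]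
  simp only [Multiset.ext, hcount]

end Alloc

end Assignment

open Assignment

lemma MultiDemand.eq_sum_singleton {M : Type*} {v : Finset M → ℝ} {k : ℕ} (hmd : MultiDemand v k)
    (hmono : MonotoneVal v) (hnorm : v ∅ = 0) {U : Finset M} (hU : #U ≤ k) :
    v U = ∑ x ∈ U, v {x} := by
  obtain ⟨⟨T, hTU, -, hT⟩, hmax⟩ := hmd U
  refine le_antisymm ?_ (hmax ⟨U, Subset.rfl, hU, rfl⟩)
  rw [hT]
  exact sum_le_sum_of_subset_of_nonneg hTU fun x _ _ => hnorm ▸ hmono (empty_subset {x})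

section Market

variable {ι M : Type*} [Fintype ι] [DecidableEq ι] [Fintype M]

lemma SW_alloc {v : ι → Finset M → ℝ} {k : ι → ℕ} (hmono : ∀ i, MonotoneVal (v i))
    (hnorm : ∀ i, v i ∅ = 0) (hmd : ∀ i, MultiDemand (v i) (k i)) {σ : M → ι}
    (hσ : ∀ j, #(alloc σ j) ≤ k j) : SW v (alloc σ) = value (fun j x => v j {x}) σ := by
  calc SW v (alloc σ) = ∑ j, ∑ x ∈ alloc σ j, v (σ x) {x} :=
        sum_congr rfl fun j _ => by
          rw [(hmd j).eq_sum_singleton (hmono j) (hnorm j) (hσ j)]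
          exact sum_congr rfl fun x hx => by rw [mem_alloc.mp hx]
    _ = value (fun j x => v j {x}) σ := sum_fiberwise _ _ _

lemma exists_isOptimalAlloc (v : ι → Finset M → ℝ) : ∃ A : ι → Finset M, IsOptimalAlloc v A := by
  classical
  obtain ⟨A, hA, hmax⟩ := exists_max_image (univ.filter IsAlloc) (SW v)
    ⟨fun _ => ∅, mem_filter.mpr ⟨mem_univ _, fun _ _ _ => disjoint_empty_left _⟩⟩
  exact ⟨A, (mem_filter.mp hA).2, fun B hB => hmax B (mem_filter.mpr ⟨mem_univ _, hB⟩)⟩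

theorem isOptimalAlloc_of_forall_legalBundle {v : ι → Finset M → ℝ} {k : ι → ℕ}
    (hmono : ∀ i, MonotoneVal (v i)) (hnorm : ∀ i, v i ∅ = 0)
    (hmd : ∀ i, MultiDemand (v i) (k i))
    (hopt : ∀ A : ι → Finset M, IsOptimalAlloc v A → (∀ x, ∃ i, x ∈ A i) ∧ ∀ i, #(A i) = k i)
    {B : ι → Finset M} (hB : IsAlloc B) (hcover : ∀ x, ∃ i, x ∈ B i)
    (hlegal : ∀ i, LegalBundle v k i (B i)) : IsOptimalAlloc v B := by
  set w : ι → M → ℝ := fun j x => v j {x}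
  have of_optimal : ∀ A, IsOptimalAlloc v A → ∃ σ, alloc σ = A ∧ ∀ j, #(alloc σ j) = k j := by
    intro A hA
    obtain ⟨σ, rfl⟩ := exists_alloc_eq hA.1 (hopt A hA).1
    exact ⟨σ, rfl, (hopt _ hA).2⟩
  obtain ⟨A, hA⟩ := exists_isOptimalAlloc v
  obtain ⟨τ, rfl, hτk⟩ := of_optimal A hA
  have load_eq : ∀ ρ : M → ι, (∀ j, #(alloc ρ j) = k j) → load ρ = load τ := fun ρ hρ =>
    load_eq_load_iff.mpr fun j => (hρ j).trans (hτk j).symm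
  have hSW : ∀ ρ : M → ι, load ρ = load τ → SW v (alloc ρ) = value w ρ := fun ρ hρ =>
    SW_alloc hmono hnorm hmd fun j => ((load_eq_load_iff.mp hρ j).trans (hτk j)).le
  have hτ : IsOptimal w τ := fun ρ hρ => by
    rw [← hSW ρ hρ, ← hSW τ rfl]
    exact hA.2 _ (isAlloc_alloc ρ)
  obtain ⟨σ, rfl⟩ := exists_alloc_eq hB hcover
  have hσ : load σ = load τ := load_eq σ fun j => (hlegal j).1
  have hedge : ∀ x, ∃ ρ, load ρ = load τ ∧ value w ρ = value w τ ∧ ρ x = σ x := by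
    intro x
    obtain ⟨A', hA', hxA'⟩ := (hlegal (σ x)).2 x (mem_alloc.mpr rfl)
    obtain ⟨ρ, rfl, hρk⟩ := of_optimal A' hA'
    have hρ := load_eq ρ hρk
    refine ⟨ρ, hρ, ?_, mem_alloc.mp hxA'⟩
    rw [← hSW ρ hρ, ← hSW τ rfl]
    exact le_antisymm (hA.2 _ hA'.1) (hA'.2 _ hA.1)
  refine ⟨hB, fun B' hB' => ?_⟩
  calc SW v B' ≤ SW v (alloc τ) := hA.2 B' hB'
    _ = value w τ := hSW τ rfl
    _ = value w σ := (hτ.value_eq_of_edges_optimal hσ hedge).symm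
    _ = SW v (alloc σ) := (hSW σ hσ).symm

end Market

theorem legal_demands_give_dynamic_pricing_general
    {M : Type*} [Fintype M] [DecidableEq M] {n : ℕ}
    (v : Fin n → Finset M → ℝ) (k : Fin n → ℕ)
    (hmono : ∀ i, MonotoneVal (v i)) (hnorm : ∀ i, v i ∅ = 0)
    (hmd : ∀ i, MultiDemand (v i) (k i))
    (hopt : ∀ A : Fin n → Finset M, IsOptimalAlloc v A →
      (∀ x : M, ∃ i, x ∈ A i) ∧ ∀ i, (A i).card = k i)
    (p : M → ℝ) (hp : ∀ x, 0 ≤ p x)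
    (hdem : ∀ (i : Fin n) (S : Finset M), InDemand (v i) p S →
      LegalBundle v k i S ∧
      ∃ B : Fin n → Finset M, B i = S ∧ IsAlloc B ∧
        (∀ j, j ≠ i → LegalBundle v k j (B j)) ∧ (∀ x : M, ∃ j, x ∈ B j)) :
    IsDynamicPricing v p := by
  refine ⟨hp, fun i S hS => ?_⟩
  obtain ⟨hSlegal, B, hBi, hB, hBlegal, hcover⟩ := hdem i S hS
  refine ⟨B, isOptimalAlloc_of_forall_legalBundle hmono hnorm hmd hopt hB hcover fun j => ?_, hBi⟩
  rcases eq_or_ne j i with rfl | hj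
  · rwa [hBi]
  · exact hBlegal j hj

/-- If every demanded bundle of every buyer is legal for her and
the remaining items can be partitioned legally among the other buyers, then the
price vector is an optimal dynamic pricing. -/
theorem legal_demands_give_dynamic_pricing
    {M : Type*} [Fintype M] [DecidableEq M] {n : ℕ}
    (v : Fin n → Finset M → ℝ) (k : Fin n → ℕ)
    (hmono : ∀ i, MonotoneVal (v i)) (hnorm : ∀ i, v i ∅ = 0)
    (hmd : ∀ i, MultiDemand (v i) (k i))
    (hcard : Fintype.card M = ∑ i, k i)
    (hopt : ∀ A : Fin n → Finset M, IsOptimalAlloc v A →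
      (∀ x : M, ∃ i, x ∈ A i) ∧ ∀ i, (A i).card = k i)
    (p : M → ℝ) (hp : ∀ x, 0 ≤ p x)
    (hdem : ∀ (i : Fin n) (S : Finset M), InDemand (v i) p S →
      LegalBundle v k i S ∧
      ∃ B : Fin n → Finset M, B i = S ∧ IsAlloc B ∧
        (∀ j, j ≠ i → LegalBundle v k j (B j)) ∧ (∀ x : M, ∃ j, x ∈ B j)) :
    IsDynamicPricing v p :=
  legal_demands_give_dynamic_pricing_general v k hmono hnorm hmd hopt p hp hdem
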